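/- Let R be a reduced elliptic root system of rank l with fundamental-set Π ∪ {a}. Then for every α ∈ R there exists m ∈ ℤ ∖ {0} such that α + ma ∈ R. -/

import Mathlib

/- ## Preliminaries: extended affine root systems (Saito) -/

noncomputable section

open Set

/-- The reflection `s_v : z ↦ z - (v^∨, z) v = z - (2 (v,z)/(v,v)) v` associated to a
bilinear form `B` and a vector `v`.  (When `B v v = 0` this is the identity, by the
`division by zero = 0` convention; reflections are only ever used at non-isotropic `v`.) -/
def srefl {V : Type*} [AddCommGroup V] [Module ℝ V]
    (B : LinearMap.BilinForm ℝ V) (v : V) : Module.End ℝ V :=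
  LinearMap.id - (((2 * (B v v)⁻¹) • (B v)).smulRight v)

/-- The Weyl group `W_S` generated by the reflections in the elements of `S`
(realized as the multiplicative closure; each generator is an involution, so this
agrees with the generated group). -/
def weyl {V : Type*} [AddCommGroup V] [Module ℝ V]
    (B : LinearMap.BilinForm ℝ V) (S : Set V) : Submonoid (Module.End ℝ V) :=
  Submonoid.closure (srefl B '' S)

/-- The orbit `W_S · α`. -/
def worbit {V : Type*} [AddCommGroup V] [Module ℝ V]
    (B : LinearMap.BilinForm ℝ V) (S : Set V) (α : V) : Set V :=
  {v | ∃ w ∈ weyl B S, w α = v}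

/-- `V⁰`, the set of isotropic vectors. -/
def nullSet {V : Type*} [AddCommGroup V] [Module ℝ V]
    (B : LinearMap.BilinForm ℝ V) : Set V := {v | B v v = 0}

/-- `ℤR`, the subgroup of `V` generated by `R`. -/
def zspan {V : Type*} [AddCommGroup V] (R : Set V) : AddSubgroup V :=
  AddSubgroup.closure R

/-- `ℤ≥0 Π`, the set of nonnegative-integer linear combinations of elements of `Π`. -/
def nnspan {V : Type*} [AddCommMonoid V] (P : Set V) : Set V :=
  (AddSubmonoid.closure P : Set V)

/-- `(R, V)` is an `n`-extended affine root system of rank `l` (K. Saito). -/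
structure IsEARS {V : Type*} [AddCommGroup V] [Module ℝ V]
    (B : LinearMap.BilinForm ℝ V) (R : Set V) (l n : ℕ) : Prop where
  rank_pos : 1 ≤ l
  findim : FiniteDimensional ℝ V
  symm : ∀ u v, B u v = B v u
  posSemidef : ∀ v, 0 ≤ B v v
  dim_eq : Module.finrank ℝ V = l + n
  null_eq : nullSet B = (LinearMap.ker B : Set V)
  dim_null : Module.finrank ℝ (LinearMap.ker B) = n
  /-- (AX1), first half -/
  root_nonisotropic : ∀ α ∈ R, B α α ≠ 0
  /-- (AX1), second half -/
  span_eq_top : Submodule.span ℝ R = ⊤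
  /-- (AX2) -/
  free : Module.Free ℤ (zspan R)
  /-- (AX2) -/
  rank_eq : Module.finrank ℤ (zspan R) = l + n
  /-- (AX3): `(α^∨, β) ∈ ℤ` -/
  integral : ∀ α ∈ R, ∀ β ∈ R, ∃ m : ℤ, 2 * B α β = (m : ℝ) * B α α
  /-- (AX4) -/
  reflect : ∀ α ∈ R, srefl B α '' R = R
  /-- (AX5) -/
  connected : ∀ S' ⊆ R, S'.Nonempty → S' ≠ R → ∃ x ∈ S', ∃ y ∈ R \ S', B x y ≠ 0

/-- `R` is reduced, i.e. `R ∩ 2R = ∅`. -/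
def IsReducedRS {V : Type*} [AddCommGroup V] [Module ℝ V] (R : Set V) : Prop :=
  ∀ α ∈ R, (2 : ℤ) • α ∉ R

/-- `Π₀` is a base (with `m` elements) of the root system `R₀`:
`Π₀ ⊆ R₀`, `Π₀` consists of `m` linearly independent elements, and
`R₀ = (R₀ ∩ ℤ≥0 Π₀) ∪ (R₀ ∩ ℤ≤0 Π₀)`. -/
def IsBaseSet {M : Type*} [AddCommGroup M] [Module ℝ M] (R₀ P₀ : Set M) (m : ℕ) : Prop :=
  P₀ ⊆ R₀ ∧ P₀.Finite ∧ P₀.ncard = m ∧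
  LinearIndependent ℝ ((↑) : P₀ → M) ∧
  R₀ = (R₀ ∩ nnspan P₀) ∪ (R₀ ∩ (-(nnspan P₀)))

/-- The bilinear form induced on a quotient `V ⧸ W` by a form vanishing on `W`. -/
def quotForm {V : Type*} [AddCommGroup V] [Module ℝ V]
    (W : Submodule ℝ V) (B : LinearMap.BilinForm ℝ V)
    (h1 : ∀ w ∈ W, B w = 0) (h2 : ∀ v : V, ∀ w ∈ W, B v w = 0) :
    LinearMap.BilinForm ℝ (V ⧸ W) :=
  Submodule.liftQ W
    { toFun := fun v => Submodule.liftQ W (B v) (fun w hw => LinearMap.mem_ker.mpr (h2 v w hw))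
      map_add' := fun u v => by
        ext x
        simp
      map_smul' := fun c v => by
        ext x
        simp }
    (fun w hw => by
      simp only [LinearMap.mem_ker]
      ext x
      simp [h1 w hw])

end

/-- A fundamental-set `Π ∪ {a}` of a reduced elliptic root system `R` of rank `l`:
(FS1) `a ∈ (ℤR)⁰` and `(ℤR)⁰ = ℤa ⊕ ℤb` for some `b`;
(FS2) `|Π| = l+1`, `Π ⊆ R` and `π_a(Π)` is a base of the affine root system `π_a(R)`. -/
def IsFundamentalSet {V : Type*} [AddCommGroup V] [Module ℝ V]
    (B : LinearMap.BilinForm ℝ V) (R : Set V) (l : ℕ) (P : Set V) (a : V) : Prop :=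
  a ∈ zspan R ∧ B a a = 0 ∧
  (∃ b : V, b ∈ zspan R ∧ B b b = 0 ∧
    ((zspan R : Set V) ∩ nullSet B = {v | ∃ m n : ℤ, v = m • a + n • b}) ∧
    (∀ m n : ℤ, m • a + n • b = 0 → m = 0 ∧ n = 0)) ∧
  P ⊆ R ∧ P.Finite ∧ P.ncard = l + 1 ∧
  IsBaseSet ((Submodule.span ℝ {a}).mkQ '' R) ((Submodule.span ℝ {a}).mkQ '' P) (l + 1)

/-!
For `u` in the radical, the reflections in two roots `β` and `β + u` compose to the translation
`δ ↦ δ - (β^∨, δ) u`, which preserves `R`. So as soon as one root `β` has a translate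
`β + m a ∈ R` with `m ≠ 0`, connectedness of `R` spreads this to every root.

Suppose no root has such a translate. Since `ℤR` is a full lattice, `ℤR ∩ V⁰ = ℤa ⊕ ℤb` forces
every real translate `β + r a ∈ R` to have `r ∈ ℤ`, hence `r = 0`. Write a root `α` with
`π_a α = Σ n_p π_a p` (`n_p ≥ 0`) as `α = Σ n_p p + r a`. Reflecting in some `q ∈ Π` with
`(α, q) > 0` gives either a positive root of smaller height or a negative root; in the latter
case `α ≡ q` or `α ≡ 2q` modulo `ℝa`, and the rigidity just proved, together with reducedness,
forces `α = q`. By induction on the height `α = Σ n_p p`, so `R ⊆ span Π`, which has dimension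
`l + 1 < dim V = l + 2`.
-/

open Module Set

theorem AddSubgroup.linearIndependent_real_of_linearIndependent_int {V : Type*} [AddCommGroup V]
    [Module ℝ V] [FiniteDimensional ℝ V] (Λ : AddSubgroup V) [Free ℤ Λ] [Module.Finite ℤ Λ]
    (hspan : Submodule.span ℝ (Λ : Set V) = ⊤) (hrank : finrank ℤ Λ = finrank ℝ V)
    {ι : Type*} {v : ι → V} (hvΛ : ∀ i, v i ∈ Λ) (hv : LinearIndependent ℤ v) :
    LinearIndependent ℝ v := by
  let e := Free.chooseBasis ℤ Λ
  have hspan_e : ⊤ ≤ Submodule.span ℝ (range fun i => (e i : V)) := by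
    rw [← hspan, Submodule.span_le]
    intro x hx
    have hxe : (⟨x, hx⟩ : Λ) ∈ Submodule.span ℤ (range e) := e.span_eq ▸ Submodule.mem_top
    have := Submodule.apply_mem_span_image_of_mem_span Λ.subtype.toIntLinearMap hxe
    rw [← range_comp] at this
    exact Submodule.span_le_restrictScalars ℤ ℝ _ this
  let G : Basis _ ℝ V := .mk (linearIndependent_of_top_le_span_of_card_eq_finrank hspan_e
    (by rw [← hrank, finrank_eq_card_chooseBasisIndex])) hspan_e
  -- `G` identifies `V` with the base change `ℝ ⊗ Λ`, which preserves linear independence.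
  let φ : TensorProduct ℤ ℝ Λ ≃ₗ[ℝ] V := (Algebra.TensorProduct.basis ℝ e).equiv G (.refl _)
  have hφ : (φ.toLinearMap.restrictScalars ℤ).comp (TensorProduct.mk ℤ ℝ Λ 1) =
      Λ.subtype.toIntLinearMap :=
    e.ext fun i => by
      change φ (1 ⊗ₜ e i) = e i
      rw [← Algebra.TensorProduct.basis_apply, Basis.equiv_apply]
      simp [G]
  have hw : LinearIndependent ℤ fun i => (⟨v i, hvΛ i⟩ : Λ) :=
    LinearIndependent.of_comp Λ.subtype.toIntLinearMap hv
  have hvφ : v = φ ∘ fun i => (1 : ℝ) ⊗ₜ[ℤ] (⟨v i, hvΛ i⟩ : Λ) :=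
    funext fun i => (LinearMap.congr_fun hφ ⟨v i, hvΛ i⟩).symm
  rw [hvφ]
  exact (Module.Flat.linearIndependent_one_tmul hw).map_injOn φ.toLinearMap φ.injective.injOn

theorem Submodule.exists_eq_add_smul_of_mkQ_eq {K M : Type*} [Ring K] [AddCommGroup M]
    [Module K M] {a x y : M} (h : (K ∙ a).mkQ x = (K ∙ a).mkQ y) : ∃ r : K, x = y + r • a := by
  obtain ⟨r, hr⟩ := Submodule.mem_span_singleton.1 ((Submodule.Quotient.eq _).1 h)
  exact ⟨r, by rw [hr]; abel⟩

theorem IsBaseSet.exists_eq_sum_nsmul {M : Type*} [AddCommGroup M] [Module ℝ M] {R₀ P₀ : Set M}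
    {m : ℕ} (h : IsBaseSet R₀ P₀ m) {ι : Type*} [Fintype ι] {v : ι → M} (hv : range v = P₀)
    {x : M} (hx : x ∈ R₀) : ∃ c : ι → ℕ, x = ∑ i, c i • v i ∨ -x = ∑ i, c i • v i := by
  obtain ⟨-, -, -, -, hR₀⟩ := h
  rw [hR₀, ← hv] at hx
  rcases hx with ⟨-, hpos⟩ | ⟨-, hneg⟩
  · obtain ⟨c, hc⟩ := AddSubmonoid.mem_closure_range_iff_of_fintype.1 hpos
    exact ⟨c, .inl hc⟩
  · obtain ⟨c, hc⟩ := AddSubmonoid.mem_closure_range_iff_of_fintype.1 hneg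
    exact ⟨c, .inr hc⟩

theorem LinearIndependent.eq_of_sum_nsmul_eq {ι M : Type*} [Fintype ι] [AddCommGroup M]
    [Module ℝ M] {v : ι → M} (hv : LinearIndependent ℝ v) {c c' : ι → ℕ}
    (h : ∑ i, c i • v i = ∑ i, c' i • v i) : c = c' :=
  funext (Fintype.linearIndependent_iffₛ.1 (hv.restrict_scalars' ℕ) c c' h)

theorem srefl_apply {V : Type*} [AddCommGroup V] [Module ℝ V] (B : LinearMap.BilinForm ℝ V)
    (v z : V) :
    srefl B v z = z - (2 * (B v v)⁻¹ * B v z) • v := by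
  simp [srefl]

namespace IsEARS

variable {V : Type*} [AddCommGroup V] [Module ℝ V] {B : LinearMap.BilinForm ℝ V} {R : Set V}
  {l n : ℕ} {a : V}

theorem bilin_self_pos (hE : IsEARS B R l n) {α : V} (hα : α ∈ R) : 0 < B α α :=
  (hE.posSemidef α).lt_of_ne' (hE.root_nonisotropic α hα)

theorem sub_smul_mem (hE : IsEARS B R l n) {β δ : V} (hβ : β ∈ R) (hδ : δ ∈ R) {k : ℝ}
    (hk : 2 * B β δ = k * B β β) : δ - k • β ∈ R := by
  have hsβ : srefl B β δ = δ - k • β := by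
    rw [srefl_apply, mul_right_comm, hk, mul_inv_cancel_right₀ (hE.root_nonisotropic β hβ)]
  rw [← hsβ, ← hE.reflect β hβ]
  exact mem_image_of_mem _ hδ

theorem neg_mem (hE : IsEARS B R l n) {δ : V} (hδ : δ ∈ R) : -δ ∈ R := by
  simpa [two_smul] using hE.sub_smul_mem hδ hδ (k := 2) rfl

theorem sub_smul_mem_of_add_mem (hE : IsEARS B R l n) {β u δ : V} (hβ : β ∈ R) (hβu : β + u ∈ R)
    (hu : B u = 0) (hδ : δ ∈ R) {k : ℝ} (hk : 2 * B β δ = k * B β β) : δ - k • u ∈ R := by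
  have hβu0 : B β u = 0 := by rw [hE.symm, hu, LinearMap.zero_apply]
  have hBβu : B (β + u) = B β := by rw [map_add, hu, add_zero]
  have hδ' : δ - k • (β + u) ∈ R :=
    hE.sub_smul_mem hβu hδ (by rw [hBβu, map_add, hβu0, add_zero, hk])
  have hk' : 2 * B β (δ - k • (β + u)) = -k * B β β := by
    simp only [map_sub, map_smul, map_add, hβu0, add_zero, smul_eq_mul]
    linarith
  convert hE.sub_smul_mem hβ hδ' hk' using 1
  module

theorem forall_exists_add_zsmul_mem (hE : IsEARS B R l n) (ha : B a = 0)
    (hseed : ∃ β ∈ R, ∃ m : ℤ, m ≠ 0 ∧ β + m • a ∈ R) :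
    ∀ α ∈ R, ∃ m : ℤ, m ≠ 0 ∧ α + m • a ∈ R := by
  by_contra! ⟨α, hαR, hα⟩
  let S := {x ∈ R | ∃ m : ℤ, m ≠ 0 ∧ x + m • a ∈ R}
  have hSR : S ≠ R := fun h => by
    obtain ⟨-, m, hm, hαm⟩ := h.symm ▸ hαR
    exact hα m hm hαm
  obtain ⟨x, ⟨hxR, m, hm, hxm⟩, y, ⟨hyR, hyS⟩, hxy⟩ :=
    hE.connected S (sep_subset _ _) hseed hSR
  obtain ⟨k, hk⟩ := hE.integral x hxR y hyR
  have hk0 : k ≠ 0 := by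
    rintro rfl
    exact hxy (by simpa using hk)
  have hy := hE.sub_smul_mem_of_add_mem hxR hxm (by simp [ha]) hyR hk
  refine hyS ⟨hyR, -(k * m), by simp [hk0, hm], ?_⟩
  convert hy using 1
  rw [← Int.cast_smul_eq_zsmul ℝ, ← Int.cast_smul_eq_zsmul ℝ]
  push_cast
  module

theorem exists_int_eq_of_add_smul_mem (hE : IsEARS B R l n) {b : V}
    (haR : a ∈ zspan R) (hbR : b ∈ zspan R) (haa : B a a = 0)
    (hnull : (zspan R : Set V) ∩ nullSet B = {v | ∃ m n : ℤ, v = m • a + n • b})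
    (hab : ∀ m n : ℤ, m • a + n • b = 0 → m = 0 ∧ n = 0) {β : V} (hβ : β ∈ R) {r : ℝ}
    (hr : β + r • a ∈ R) : ∃ m : ℤ, r = m := by
  have := hE.findim
  have := hE.free
  have : Module.Finite ℤ (zspan R) :=
    finite_of_finrank_pos (by rw [hE.rank_eq]; linarith [hE.rank_pos])
  have hspan : Submodule.span ℝ (zspan R : Set V) = ⊤ :=
    top_unique (hE.span_eq_top ▸ Submodule.span_mono AddSubgroup.subset_closure)
  have habℝ : LinearIndependent ℝ ![a, b] :=
    (zspan R).linearIndependent_real_of_linearIndependent_int hspan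
      (by rw [hE.rank_eq, hE.dim_eq]) (by simp [Fin.forall_fin_two, haR, hbR])
      (LinearIndependent.pair_iff.2 hab)
  have hra : r • a ∈ (zspan R : Set V) ∩ nullSet B := by
    refine ⟨?_, by simp [nullSet, haa]⟩
    have : (β + r • a) - β ∈ zspan R :=
      sub_mem (AddSubgroup.subset_closure hr) (AddSubgroup.subset_closure hβ)
    simpa using this
  rw [hnull] at hra
  obtain ⟨m, k, hmk⟩ := hra
  refine ⟨m, sub_eq_zero.1 (LinearIndependent.pair_iff.1 habℝ (r - m) (-k) ?_).1⟩
  rw [sub_smul, hmk, Int.cast_smul_eq_zsmul, neg_smul, Int.cast_smul_eq_zsmul]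
  abel

theorem eq_nsmul_of_mkQ_eq_nsmul (hE : IsEARS B R l n) (hred : IsReducedRS R) (ha : B a = 0)
    (hrigid : ∀ β ∈ R, ∀ r : ℝ, β + r • a ∈ R → r = 0) {α q : V} (hα : α ∈ R) (hq : q ∈ R)
    {t : ℕ} (h : (ℝ ∙ a).mkQ α = t • (ℝ ∙ a).mkQ q) : α = t • q := by
  obtain ⟨r, rfl⟩ := Submodule.exists_eq_add_smul_of_mkQ_eq (h.trans (map_nsmul _ t q).symm)
  have hBa : B q a = 0 := by rw [hE.symm, ha, LinearMap.zero_apply]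
  have hBq : B (t • q + r • a) q = t * B q q := by simp [ha]
  have hBα : B (t • q + r • a) (t • q + r • a) = t ^ 2 * B q q := by
    simp [ha, hBa]
    ring
  obtain ⟨k, hk⟩ := hE.integral _ hα q hq
  have hkt : k * t = 2 := by
    have htq : (t : ℝ) * B q q ≠ 0 := by
      have := hE.bilin_self_pos hα
      rw [hBα] at this
      intro h0
      nlinarith
    rw [hBq, hBα] at hk
    have : ((k * t : ℤ) : ℝ) = 2 := by
      push_cast
      exact mul_right_cancel₀ htq (by linear_combination -hk)
    exact_mod_cast this
  rcases (Nat.dvd_prime Nat.prime_two).1 (by exact_mod_cast Dvd.intro_left k hkt) with rfl | rfl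
  · simp [hrigid q hq r (by simpa using hα)]
  · have hk1 : k = 1 := by omega
    have hqr : -(q - (1 : ℝ) • (2 • q + r • a)) ∈ R :=
      hE.neg_mem (hE.sub_smul_mem hα hq (by simpa [hk1] using hk))
    have hr := hrigid q hq r (by convert hqr using 1; module)
    exact (hred q hq (by simpa [hr, two_smul] using hα)).elim

theorem exists_pos_coeff_of_eq_sum_nsmul (hE : IsEARS B R l n) (ha : B a = 0) {α : V}
    (hα : α ∈ R) {ι : Type*} [Fintype ι] {v : ι → V} {c : ι → ℕ} {r : ℝ}
    (hαr : α = ∑ i, c i • v i + r • a) : ∃ i, 0 < c i ∧ 0 < B (v i) α := by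
  have hsum : ∑ _i : ι, (0 : ℝ) < ∑ i, (c i : ℝ) * B α (v i) := by
    calc ∑ _i : ι, (0 : ℝ) = 0 := Finset.sum_const_zero
      _ < B α α := hE.bilin_self_pos hα
      _ = B α (∑ i, c i • v i + r • a) := by rw [← hαr]
      _ = ∑ i, (c i : ℝ) * B α (v i) := by simp [hE.symm α a, ha]
  obtain ⟨i, -, hi⟩ := Finset.exists_lt_of_sum_lt hsum
  rcases pos_and_pos_or_neg_and_neg_of_mul_pos hi with ⟨hc, hB⟩ | ⟨hc, -⟩
  · exact ⟨i, by exact_mod_cast hc, by rwa [hE.symm]⟩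
  · exact absurd hc (Nat.cast_nonneg _).not_gt

theorem eq_sum_nsmul_of_mkQ_eq_sum_nsmul (hE : IsEARS B R l n) (hred : IsReducedRS R)
    (ha : B a = 0) (hrigid : ∀ β ∈ R, ∀ r : ℝ, β + r • a ∈ R → r = 0) {P : Set V} [Fintype P]
    (hPR : P ⊆ R) (hind : LinearIndependent ℝ fun p : P => (ℝ ∙ a).mkQ p)
    (hdecomp : ∀ α ∈ R, ∃ c : P → ℕ, (ℝ ∙ a).mkQ α = ∑ p, c p • (ℝ ∙ a).mkQ p ∨
      -(ℝ ∙ a).mkQ α = ∑ p, c p • (ℝ ∙ a).mkQ p)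
    {α : V} (hα : α ∈ R) {c : P → ℕ} (hc : (ℝ ∙ a).mkQ α = ∑ p, c p • (ℝ ∙ a).mkQ p) :
    α = ∑ p, c p • (p : V) := by
  classical
  set π := (ℝ ∙ a).mkQ
  induction hsum : ∑ p, c p using Nat.strong_induction_on generalizing α c with
  | _ t IH =>
  obtain ⟨r, hr⟩ := Submodule.exists_eq_add_smul_of_mkQ_eq
    (hc.trans (by simp [π]) : π α = π (∑ p, c p • (p : V)))
  obtain ⟨q, hcq, hαq⟩ := hE.exists_pos_coeff_of_eq_sum_nsmul ha hα hr
  obtain ⟨k, hk⟩ := hE.integral q (hPR q.2) α hα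
  have hk0 : 0 < k := by
    have := hE.bilin_self_pos (hPR q.2)
    have : (0 : ℝ) < k := by nlinarith
    exact_mod_cast this
  lift k to ℕ using hk0.le
  have hγ : α - k • (q : V) ∈ R := by
    simpa [Nat.cast_smul_eq_nsmul] using hE.sub_smul_mem (hPR q.2) hα hk
  have hsingle : ∀ f : P → V, ∑ p, (Pi.single q k : P → ℕ) p • f p = k • f q := by
    simp [Pi.single_apply]
  have hπα : π α = π (α - k • (q : V)) + ∑ p, (Pi.single q k : P → ℕ) p • π p := by
    simp
  rcases hdecomp _ hγ with ⟨c', hpos | hneg⟩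
  · have hcc' : c = c' + Pi.single q k := hind.eq_of_sum_nsmul_eq <| by
      simp only [Pi.add_apply, add_smul, Finset.sum_add_distrib, ← hc, ← hpos, hπα]
    have hlt : ∑ p, c' p < t := by
      rw [← hsum, hcc']
      simpa [Finset.sum_add_distrib] using hk0
    have hγc' := IH _ hlt hγ hpos rfl
    rw [hcc']
    simp only [Pi.add_apply, add_smul, Finset.sum_add_distrib, ← hγc', hsingle]
    abel
  · have hcc' : c + c' = Pi.single q k := hind.eq_of_sum_nsmul_eq <| by
      simp only [Pi.add_apply, add_smul, Finset.sum_add_distrib, ← hc, ← hneg, hπα]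
      abel
    have hc0 : ∀ p, p ≠ q → c p = 0 := fun p hp => by
      have hp' := congr_fun hcc' p
      simp only [Pi.add_apply, Pi.single_apply, hp, if_false, Nat.add_eq_zero_iff] at hp'
      exact hp'.1
    have hαq' : π α = c q • π q :=
      hc.trans (Finset.sum_eq_single q (fun p _ hp => by simp [hc0 p hp]) (by simp))
    rw [hE.eq_nsmul_of_mkQ_eq_nsmul hred ha hrigid hα (hPR q.2) hαq']
    symm
    exact Finset.sum_eq_single q (fun p _ hp => by simp [hc0 p hp]) (by simp)

theorem subset_span_of_forall_mkQ_eq_sum_nsmul (hE : IsEARS B R l n) (hred : IsReducedRS R)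
    (ha : B a = 0) (hrigid : ∀ β ∈ R, ∀ r : ℝ, β + r • a ∈ R → r = 0) {P : Set V} [Fintype P]
    (hPR : P ⊆ R) (hind : LinearIndependent ℝ fun p : P => (ℝ ∙ a).mkQ p)
    (hdecomp : ∀ α ∈ R, ∃ c : P → ℕ, (ℝ ∙ a).mkQ α = ∑ p, c p • (ℝ ∙ a).mkQ p ∨
      -(ℝ ∙ a).mkQ α = ∑ p, c p • (ℝ ∙ a).mkQ p) :
    R ⊆ Submodule.span ℝ P := by
  intro α hα
  have hsum_mem : ∀ c : P → ℕ, ∑ p, c p • (p : V) ∈ Submodule.span ℝ P := fun c =>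
    Submodule.sum_mem _ fun p _ => Submodule.smul_of_tower_mem _ _ (Submodule.subset_span p.2)
  obtain ⟨c, hpos | hneg⟩ := hdecomp α hα
  · rw [hE.eq_sum_nsmul_of_mkQ_eq_sum_nsmul hred ha hrigid hPR hind hdecomp hα hpos]
    exact hsum_mem c
  · rw [← neg_neg α, hE.eq_sum_nsmul_of_mkQ_eq_sum_nsmul hred ha hrigid hPR hind hdecomp
      (hE.neg_mem hα) (by rwa [map_neg])]
    exact Submodule.neg_mem _ (hsum_mem c)

end IsEARS

/-- In a reduced elliptic root system with fundamental-set `Π ∪ {a}`,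
every root `α` has a translate `α + m a ∈ R` with `m` a nonzero integer. -/
theorem stmt6 {V : Type*} [AddCommGroup V] [Module ℝ V]
    (B : LinearMap.BilinForm ℝ V) (R : Set V) (l : ℕ)
    (hE : IsEARS B R l 2) (hred : IsReducedRS R)
    (P : Set V) (a : V) (hfs : IsFundamentalSet B R l P a) :
    ∀ α ∈ R, ∃ m : ℤ, m ≠ 0 ∧ α + m • a ∈ R := by
  obtain ⟨haR, haa, ⟨b, hbR, -, hnull, hab⟩, hPR, hPfin, hPcard, hbase⟩ := hfs
  have ha : B a = 0 := LinearMap.mem_ker.1 (hE.null_eq ▸ haa : a ∈ (LinearMap.ker B : Set V))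
  refine hE.forall_exists_add_zsmul_mem ha ?_
  by_contra! hno
  have hrigid : ∀ β ∈ R, ∀ r : ℝ, β + r • a ∈ R → r = 0 := fun β hβ r hr => by
    obtain ⟨m, rfl⟩ := hE.exists_int_eq_of_add_smul_mem haR hbR haa hnull hab hβ hr
    by_contra hm
    exact hno β hβ m (by exact_mod_cast hm) (by rwa [Int.cast_smul_eq_zsmul] at hr)
  have := hPfin.fintype
  have ⟨_, _, hQcard, hQind, _⟩ := hbase
  have hind : LinearIndependent ℝ fun p : P => (ℝ ∙ a).mkQ p :=
    (linearIndepOn_iff_image (injOn_of_ncard_image_eq (hQcard.trans hPcard.symm))).2 hQind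
  have hRP := hE.subset_span_of_forall_mkQ_eq_sum_nsmul hred ha hrigid hPR hind fun α hα =>
    hbase.exists_eq_sum_nsmul (image_eq_range _ _).symm (mem_image_of_mem _ hα)
  have hspan : Submodule.span ℝ P = ⊤ :=
    top_unique (hE.span_eq_top ▸ Submodule.span_le.2 hRP)
  have hdim := finrank_span_le_card (R := ℝ) P
  rw [hspan, finrank_top, hE.dim_eq, ← ncard_eq_toFinset_card', hPcard] at hdim
  omega
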